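/- arXiv:1803.07511 — 3 statements merged into one kernel-verified Lean document; each statement's English description precedes it below -/
import Mathlib

section
/- Let G be a locally compact group, σ a continuous involutive automorphism of G with fixed point group H, and Γ a σ-stable discrete subgroup of G such that Γ\G is compact. Then (Γ ∩ H)\H is compact. -/
/-!
Let `φ g = g⁻¹ * σ g` and pick a compact `C ⊆ G` whose image is all of `G ⧸ Γ`. If `h ∈ H`
lies in `c Γ` with `c ∈ C`, say `c = h γ`, then `φ c = φ γ`, and `φ Γ ⊆ Γ` since `Γ` is
`σ`-stable. So all such values lie in `φ C ∩ Γ`, which is compact and discrete, hence finite: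
they are covered by `φ D` for a finite `D ⊆ Γ`. Writing `φ c = φ δ` with `δ ∈ D`, the element
`c δ⁻¹` is fixed by `σ` and lies in `h Γ`, so the compact set `C D⁻¹ ∩ H` maps onto
`H ⧸ (Γ ∩ H)`.
-/

open Set Pointwise

theorem IsOpenMap.exists_isCompact_image_eq_univ {X Y : Type*} [TopologicalSpace X]
    [TopologicalSpace Y] [WeaklyLocallyCompactSpace X] [CompactSpace Y] {f : X → Y}
    (hf : IsOpenMap f) (hsurj : Function.Surjective f) :
    ∃ K : Set X, IsCompact K ∧ f '' K = univ := by
  choose K hK hKx using fun x : X => exists_compact_mem_nhds x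
  set g := Function.surjInv hsurj
  obtain ⟨t, ht⟩ := CompactSpace.elim_nhds_subcover (fun y => f '' K (g y))
    fun y => by simpa [g, Function.surjInv_eq hsurj] using hf.image_mem_nhds (hKx (g y))
  exact ⟨⋃ y ∈ t, K (g y), t.isCompact_biUnion fun y _ => hK _, by rwa [image_iUnion₂]⟩

theorem IsCompact.finite_of_subset_discrete {X : Type*} [TopologicalSpace X] {s t : Set X}
    (hs : IsCompact s) [DiscreteTopology t] (hst : s ⊆ t) : s.Finite :=
  hs.finite ((isDiscrete_iff_discreteTopology.2 ‹_›).mono hst)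

theorem Subgroup.compactSpace_quotient_subgroupOf {G : Type*} [Group G] [TopologicalSpace G]
    {H Γ : Subgroup G} {K : Set G} (hK : IsCompact K) (hKH : K ⊆ H)
    (hHK : (H : Set G) ⊆ K * Γ) : CompactSpace (H ⧸ Γ.subgroupOf H) := by
  have hK' : IsCompact (Subtype.val ⁻¹' K : Set H) := by
    rwa [Subtype.isCompact_iff, image_preimage_eq_of_subset (by rwa [Subtype.range_coe])]
  suffices QuotientGroup.mk '' (Subtype.val ⁻¹' K) = univ from
    ⟨this ▸ hK'.image continuous_quotient_mk'⟩
  refine eq_univ_of_forall fun x => ?_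
  obtain ⟨h, rfl⟩ := QuotientGroup.mk_surjective x
  obtain ⟨k, hk, γ, hγ, hkγ⟩ := hHK h.2
  refine ⟨⟨k, hKH hk⟩, hk, QuotientGroup.eq.2 ?_⟩
  simpa [Subgroup.mem_subgroupOf, ← hkγ] using hγ

namespace MonoidHom

variable {G : Type*} [Group G] (σ : G →* G)

theorem inv_mul_map_mul_left_of_map_eq {h : G} (hh : σ h = h) (g : G) :
    (h * g)⁻¹ * σ (h * g) = g⁻¹ * σ g := by
  rw [map_mul, hh]
  group

theorem map_mul_inv_eq_self_of_inv_mul_map_eq {g d : G} (h : g⁻¹ * σ g = d⁻¹ * σ d) :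
    σ (g * d⁻¹) = g * d⁻¹ := by
  rw [map_mul, map_inv, mul_inv_eq_iff_eq_mul, mul_assoc, ← h, mul_inv_cancel_left]

end MonoidHom

theorem exists_isCompact_subset_fixedPoints_subset_mul {G : Type*} [Group G]
    [TopologicalSpace G] [IsTopologicalGroup G] [T2Space G] [LocallyCompactSpace G]
    (σ : G →* G) (hσ : Continuous σ) (H : Subgroup G) (hH : ∀ g : G, g ∈ H ↔ σ g = g)
    (Γ : Subgroup G) [DiscreteTopology Γ] (hΓ : ∀ γ ∈ Γ, σ γ ∈ Γ) [CompactSpace (G ⧸ Γ)] :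
    ∃ K : Set G, IsCompact K ∧ K ⊆ H ∧ (H : Set G) ⊆ K * Γ := by
  set φ : G → G := fun g => g⁻¹ * σ g
  have hφ : Continuous φ := continuous_inv.mul hσ
  obtain ⟨C, hC, hC_univ⟩ := QuotientGroup.isOpenMap_coe.exists_isCompact_image_eq_univ
    (QuotientGroup.mk_surjective (s := Γ))
  have hφΓ : φ '' Γ ⊆ Γ := by
    rintro _ ⟨γ, hγ, rfl⟩
    exact Γ.mul_mem (Γ.inv_mem hγ) (hΓ γ hγ)
  have hT : (φ '' C ∩ φ '' Γ).Finite :=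
    ((hC.image hφ).inter_right Γ.isClosed_of_discrete).finite_of_subset_discrete
      inter_subset_right |>.subset (inter_subset_inter_right _ hφΓ)
  obtain ⟨D, hDΓ, hD, hTD⟩ : ∃ D ⊆ (Γ : Set G), D.Finite ∧ φ '' C ∩ φ '' Γ ⊆ φ '' D :=
    exists_subset_image_finite_and.1 ⟨_, inter_subset_right, hT, le_rfl⟩
  have hH_closed : IsClosed (H : Set G) := by
    rw [show (H : Set G) = {g | σ g = g} from ext hH]
    exact isClosed_eq hσ continuous_id
  refine ⟨C * D⁻¹ ∩ H, (hC.mul hD.inv.isCompact).inter_right hH_closed, inter_subset_right, ?_⟩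
  intro h hh
  obtain ⟨c, hc, hch⟩ : (h : G ⧸ Γ) ∈ QuotientGroup.mk '' C := hC_univ ▸ mem_univ _
  have hcΓ : c⁻¹ * h ∈ Γ := QuotientGroup.eq.1 hch
  have hγ : h⁻¹ * c ∈ Γ := by simpa using Γ.inv_mem hcΓ
  have hφc : φ c = φ (h⁻¹ * c) := by
    simpa only [mul_inv_cancel_left] using
      σ.inv_mul_map_mul_left_of_map_eq ((hH h).1 hh) (h⁻¹ * c)
  obtain ⟨δ, hδ, hδc⟩ := hTD ⟨mem_image_of_mem φ hc, hφc ▸ mem_image_of_mem φ hγ⟩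
  have hfixed : c * δ⁻¹ ∈ H := (hH _).2 (σ.map_mul_inv_eq_self_of_inv_mul_map_eq hδc.symm)
  exact ⟨c * δ⁻¹, ⟨mul_mem_mul hc (inv_mem_inv.2 hδ), hfixed⟩, δ * (c⁻¹ * h),
    Γ.mul_mem (hDΓ hδ) hcΓ, by group⟩

theorem stmt_0_general {G : Type*} [Group G] [TopologicalSpace G] [IsTopologicalGroup G]
    [T2Space G] [LocallyCompactSpace G]
    (σ : G →* G) (hσcont : Continuous σ)
    (H : Subgroup G) (hH : ∀ g : G, g ∈ H ↔ σ g = g)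
    (Γ : Subgroup G) [DiscreteTopology Γ]
    (hstab : ∀ γ ∈ Γ, σ γ ∈ Γ)
    [CompactSpace (G ⧸ Γ)] :
    CompactSpace (↥H ⧸ Γ.subgroupOf H) := by
  obtain ⟨K, hK, hKH, hHK⟩ :=
    exists_isCompact_subset_fixedPoints_subset_mul σ hσcont H hH Γ hstab
  exact Subgroup.compactSpace_quotient_subgroupOf hK hKH hHK

/-- If `σ` is a continuous involutive automorphism of a locally compact
group `G` with fixed point subgroup `H`, and `Γ` is a `σ`-stable discrete subgroup
with compact quotient, then `(Γ ∩ H)\H` is compact. -/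
theorem stmt_0 {G : Type*} [Group G] [TopologicalSpace G] [IsTopologicalGroup G]
    [T2Space G] [LocallyCompactSpace G]
    (σ : G →* G) (hσcont : Continuous σ) (hσinv : ∀ g : G, σ (σ g) = g)
    (H : Subgroup G) (hH : ∀ g : G, g ∈ H ↔ σ g = g)
    (Γ : Subgroup G) [DiscreteTopology Γ]
    (hstab : ∀ γ ∈ Γ, σ γ ∈ Γ)
    [CompactSpace (G ⧸ Γ)] :
    CompactSpace (↥H ⧸ Γ.subgroupOf H) :=
  stmt_0_general σ hσcont H hH Γ hstab
end

section
/- Let G = G₁ × G₂ be a product of locally compact groups with G₂ compact, and let Γ be a discrete subgroup of G such that Γ\G is compact. Then the projection Γ₁ of Γ to G₁ is a discrete subgroup of G₁ and Γ₁\G₁ is compact. -/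
/-!
The projection `G₁ × G₂ → G₁` is proper because `G₂` is compact. A proper map sends a closed
discrete set to a set meeting every compact set in finitely many points, which in a locally
compact space is again discrete; this gives discreteness of `Γ₁`. Cocompactness is inherited
because the projection descends to a continuous surjection `(G₁ × G₂) ⧸ Γ → G₁ ⧸ Γ₁`.
-/

open Set

theorem IsProperMap.isDiscrete_image {X Y : Type*} [TopologicalSpace X] [TopologicalSpace Y]
    [T1Space Y] [WeaklyLocallyCompactSpace Y] {f : X → Y} (hf : IsProperMap f) {s : Set X}
    (hs : IsClosed s) (hs' : IsDiscrete s) : IsDiscrete (f '' s) := by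
  refine ⟨continuous_subtype_val.discrete_of_tendsto_cofinite_cocompact
    (tendsto_cofinite_cocompact_iff.mpr fun K hK ↦ ?_)⟩
  have hfin : (s ∩ f ⁻¹' K).Finite :=
    ((hf.isCompact_preimage hK).inter_left hs).finite (hs'.mono inter_subset_left)
  refine ((hfin.image f).preimage Subtype.val_injective.injOn).subset ?_
  rintro ⟨_, x, hx, rfl⟩ hxK
  exact ⟨x, ⟨hx, hxK⟩, rfl⟩

theorem QuotientGroup.compactSpace_map {G H : Type*} [Group G] [TopologicalSpace G] [Group H]
    [TopologicalSpace H] (f : G →* H) (hf : Continuous f) (hf' : Function.Surjective f)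
    (Γ : Subgroup G) [CompactSpace (G ⧸ Γ)] : CompactSpace (H ⧸ Γ.map f) := by
  have hrel : Relator.LiftFun (leftRel Γ).r (leftRel (Γ.map f)).r f f := fun x y hxy ↦ by
    rw [leftRel_apply] at hxy ⊢
    exact ⟨x⁻¹ * y, hxy, by simp⟩
  refine Function.Surjective.compactSpace (hf.quotient_map' hrel) fun q ↦ ?_
  obtain ⟨h, rfl⟩ := mk_surjective q
  obtain ⟨g, rfl⟩ := hf' h
  exact ⟨mk g, rfl⟩

theorem stmt_1_general {G₁ G₂ : Type*}
    [Group G₁] [TopologicalSpace G₁] [IsTopologicalGroup G₁] [T2Space G₁]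
    [LocallyCompactSpace G₁]
    [Group G₂] [TopologicalSpace G₂] [IsTopologicalGroup G₂] [T2Space G₂]
    [CompactSpace G₂]
    (Γ : Subgroup (G₁ × G₂)) [DiscreteTopology Γ]
    [CompactSpace ((G₁ × G₂) ⧸ Γ)] :
    DiscreteTopology ↥(Γ.map (MonoidHom.fst G₁ G₂)) ∧
      CompactSpace (G₁ ⧸ Γ.map (MonoidHom.fst G₁ G₂)) := by
  refine ⟨?_, QuotientGroup.compactSpace_map _ continuous_fst Prod.fst_surjective Γ⟩
  have hΓ₁ : IsDiscrete (Γ.map (MonoidHom.fst G₁ G₂) : Set G₁) := by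
    rw [Subgroup.coe_map]
    exact isProperMap_fst_of_compactSpace.isDiscrete_image Subgroup.isClosed_of_discrete
      (isDiscrete_iff_discreteTopology.mpr ‹_›)
  exact hΓ₁.to_subtype

/-- If `G = G₁ × G₂` with `G₂` compact and `Γ` is a discrete cocompact
subgroup of `G`, then the projection `Γ₁` of `Γ` to `G₁` is discrete and cocompact. -/
theorem stmt_1 {G₁ G₂ : Type*}
    [Group G₁] [TopologicalSpace G₁] [IsTopologicalGroup G₁] [T2Space G₁]
    [LocallyCompactSpace G₁]
    [Group G₂] [TopologicalSpace G₂] [IsTopologicalGroup G₂] [T2Space G₂]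
    [LocallyCompactSpace G₂] [CompactSpace G₂]
    (Γ : Subgroup (G₁ × G₂)) [DiscreteTopology Γ]
    [CompactSpace ((G₁ × G₂) ⧸ Γ)] :
    DiscreteTopology ↥(Γ.map (MonoidHom.fst G₁ G₂)) ∧
      CompactSpace (G₁ ⧸ Γ.map (MonoidHom.fst G₁ G₂)) :=
  stmt_1_general Γ
end

section
/- Let G = G₁ × G₂ with G₂ a compact Hausdorff group, and let Γ be a torsion-free discrete subgroup of G. Then the projection Γ₁ of Γ to G₁ is torsion-free. -/
/-!
If `γ = (γ₁, γ₂) ∈ Γ` and `γ₁ ^ n = 1`, then `γ ^ n = (1, γ₂ ^ n)` lies in the fibre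
`Δ = {g | (1, g) ∈ Γ}`. This fibre is a discrete subgroup of the compact group `G₂`, hence
closed, hence compact and therefore finite; so `γ ^ n`, and with it `γ`, has finite order.
-/

section DiscreteSubgroup

variable {G : Type*} [Group G] [TopologicalSpace G]

theorem Subgroup.finite_of_discrete [IsTopologicalGroup G] [CompactSpace G] [T2Space G]
    (H : Subgroup G) [DiscreteTopology H] : Finite H :=
  have : CompactSpace H := isCompact_iff_compactSpace.mp Subgroup.isClosed_of_discrete.isCompact
  finite_of_compact_of_discrete

theorem Subgroup.discreteTopology_comap {K : Type*} [Group K] [TopologicalSpace K]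
    (Γ : Subgroup G) [DiscreteTopology Γ] {f : K →* G} (hf : Continuous f)
    (hinj : Function.Injective f) : DiscreteTopology (Γ.comap f) :=
  DiscreteTopology.of_continuous_injective (β := Γ)
    (f := fun k => ⟨f k, k.2⟩) ((hf.comp continuous_subtype_val).subtype_mk _)
    fun _ _ h => Subtype.ext (hinj (congrArg Subtype.val h))

end DiscreteSubgroup

theorem Subgroup.isOfFinOrder_of_isOfFinOrder_fst {G₁ G₂ : Type*} [Group G₁] [Group G₂]
    (Γ : Subgroup (G₁ × G₂)) [Finite (Γ.comap (MonoidHom.inr G₁ G₂))]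
    {γ : G₁ × G₂} (hγ : γ ∈ Γ) (hfst : IsOfFinOrder γ.1) : IsOfFinOrder γ := by
  obtain ⟨n, hn, hpow⟩ := isOfFinOrder_iff_pow_eq_one.mp hfst
  have hγn : γ ^ n = MonoidHom.inr G₁ G₂ (γ.2 ^ n) := Prod.ext (by simpa using hpow) rfl
  have hfibre : γ.2 ^ n ∈ Γ.comap (MonoidHom.inr G₁ G₂) := by
    rw [Subgroup.mem_comap, ← hγn]
    exact Γ.pow_mem hγ n
  refine IsOfFinOrder.of_pow ?_ hn.ne'
  rw [hγn]
  exact ((MonoidHom.inr G₁ G₂).comp (Γ.comap (MonoidHom.inr G₁ G₂)).subtype).isOfFinOrder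
    (isOfFinOrder_of_finite (⟨_, hfibre⟩ : Γ.comap (MonoidHom.inr G₁ G₂)))

theorem stmt_2_general {G₁ G₂ : Type*}
    [Group G₁] [TopologicalSpace G₁]
    [Group G₂] [TopologicalSpace G₂] [IsTopologicalGroup G₂]
    [CompactSpace G₂] [T2Space G₂]
    (Γ : Subgroup (G₁ × G₂)) [DiscreteTopology Γ]
    (htf : ∀ γ ∈ Γ, ∀ n : ℕ, 0 < n → γ ^ n = 1 → γ = 1) :
    ∀ γ₁ ∈ Γ.map (MonoidHom.fst G₁ G₂), ∀ n : ℕ, 0 < n → γ₁ ^ n = 1 → γ₁ = 1 := by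
  rintro _ ⟨γ, hγ, rfl⟩ n hn hpow
  have : DiscreteTopology (Γ.comap (MonoidHom.inr G₁ G₂)) :=
    Γ.discreteTopology_comap (continuous_const.prodMk continuous_id)
      fun _ _ h => congrArg Prod.snd h
  have : Finite (Γ.comap (MonoidHom.inr G₁ G₂)) := Subgroup.finite_of_discrete _
  obtain ⟨m, hm, hγm⟩ := isOfFinOrder_iff_pow_eq_one.mp <|
    Γ.isOfFinOrder_of_isOfFinOrder_fst hγ (isOfFinOrder_iff_pow_eq_one.mpr ⟨n, hn, hpow⟩)
  simp [htf γ hγ m hm hγm]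

/-- If `G = G₁ × G₂` with `G₂` compact Hausdorff and `Γ` is a
torsion-free discrete subgroup of `G`, then the projection of `Γ` to `G₁` is
torsion-free. -/
theorem stmt_2 {G₁ G₂ : Type*}
    [Group G₁] [TopologicalSpace G₁] [IsTopologicalGroup G₁]
    [Group G₂] [TopologicalSpace G₂] [IsTopologicalGroup G₂]
    [CompactSpace G₂] [T2Space G₂]
    (Γ : Subgroup (G₁ × G₂)) [DiscreteTopology Γ]
    (htf : ∀ γ ∈ Γ, ∀ n : ℕ, 0 < n → γ ^ n = 1 → γ = 1) :
    ∀ γ₁ ∈ Γ.map (MonoidHom.fst G₁ G₂), ∀ n : ℕ, 0 < n → γ₁ ^ n = 1 → γ₁ = 1 :=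
  stmt_2_general Γ htf
end
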